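/- arXiv:1607.08903 — 7 statements merged into one kernel-verified Lean document; each statement's English description precedes it below -/
import Mathlib

section
/- Let C ≥ 0, let α be a real number with 0 ≤ α < 2, and let x : ℕ → ℝ be a sequence with x(n) ≥ 1 for all n, satisfying x(n+1)² ≤ x(n)² + C·x(n+1)^α for all n. Then for every n, x(n) ≤ (x(0)^(2−α) + C·n)^(1/(2−α)); in particular x(n) grows at most polynomially in n, with exponent 1/(2−α). -/
theorem discrete_iteration_polynomial_growth (C α : ℝ) (hC : 0 ≤ C)
    (hα0 : 0 ≤ α) (hα2 : α < 2) (x : ℕ → ℝ) (hx : ∀ n, 1 ≤ x n)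
    (hrec : ∀ n, x (n + 1) ^ (2 : ℝ) ≤ x n ^ (2 : ℝ) + C * x (n + 1) ^ α) :
    ∀ n : ℕ, x n ≤ (x 0 ^ (2 - α) + C * n) ^ (1 / (2 - α)) := by
  set β : ℝ := 2 - α with hβ
  have hβpos : 0 < β := by simp [hβ]; linarith
  -- step lemma
  have step : ∀ n, x (n + 1) ^ β ≤ x n ^ β + C := by
    intro n
    set a := x n with ha
    set b := x (n + 1) with hb
    have ha1 : 1 ≤ a := hx n
    have hb1 : 1 ≤ b := hx (n + 1)
    have hapos : 0 < a := lt_of_lt_of_le one_pos ha1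
    have hbpos : 0 < b := lt_of_lt_of_le one_pos hb1
    rcases le_or_gt b a with h | h
    · have : b ^ β ≤ a ^ β := Real.rpow_le_rpow (le_of_lt hbpos) h hβpos.le
      linarith
    · have hab : a ≤ b := h.le
      have hbα : (0:ℝ) < b ^ α := Real.rpow_pos_of_pos hbpos α
      have haα : (0:ℝ) < a ^ α := Real.rpow_pos_of_pos hapos α
      have key : b ^ β = b ^ (2:ℝ) / b ^ α := by
        rw [hβ, Real.rpow_sub hbpos]
      have h1 : b ^ (2:ℝ) / b ^ α ≤ (a ^ (2:ℝ) + C * b ^ α) / b ^ α :=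
        by gcongr; exact hrec n
      have h2 : (a ^ (2:ℝ) + C * b ^ α) / b ^ α = a ^ (2:ℝ) / b ^ α + C := by
        field_simp
      have h3 : a ^ (2:ℝ) / b ^ α ≤ a ^ (2:ℝ) / a ^ α := by
        apply div_le_div_of_nonneg_left (Real.rpow_nonneg hapos.le 2) haα
        exact Real.rpow_le_rpow hapos.le hab hα0
      have h4 : a ^ (2:ℝ) / a ^ α = a ^ β := by
        rw [hβ, Real.rpow_sub hapos]
      calc b ^ β = b ^ (2:ℝ) / b ^ α := key
        _ ≤ (a ^ (2:ℝ) + C * b ^ α) / b ^ α := h1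
        _ = a ^ (2:ℝ) / b ^ α + C := h2
        _ ≤ a ^ (2:ℝ) / a ^ α + C := by linarith
        _ = a ^ β + C := by rw [h4]
  -- induction
  have main : ∀ n : ℕ, x n ^ β ≤ x 0 ^ β + C * n := by
    intro n
    induction n with
    | zero => simp
    | succ k ih =>
        have := step k
        push_cast
        push_cast at ih
        linarith
  intro n
  have hxn : 0 < x n := lt_of_lt_of_le one_pos (hx n)
  have h0 : 0 < x 0 := lt_of_lt_of_le one_pos (hx 0)
  have hxid : x n = (x n ^ β) ^ (1 / β) := by
    rw [← Real.rpow_mul hxn.le, mul_one_div, div_self hβpos.ne', Real.rpow_one]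
  calc x n = (x n ^ β) ^ (1 / β) := hxid
    _ ≤ (x 0 ^ β + C * n) ^ (1 / β) := by
        apply Real.rpow_le_rpow (Real.rpow_nonneg hxn.le β) (main n)
        positivity
end

section
/- Let C ≥ 0, let α, β be real numbers with 0 ≤ β ≤ α < 2, and let x : ℕ → ℝ be a sequence with x(n) ≥ 1 for all n, satisfying x(n+1)² ≤ x(n)² + C·(x(n+1)^α + x(n+1)^β) for all n. Then for every n, x(n) ≤ (x(0)^(2−α) + 2·C·n)^(1/(2−α)). -/
lemma key_step (C α : ℝ) (hC : 0 ≤ C) (hα0 : 0 ≤ α) (hα2 : α < 2)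
    (a b : ℝ) (ha : 1 ≤ a) (hb : 1 ≤ b)
    (h : b ^ (2 : ℝ) ≤ a ^ (2 : ℝ) + 2 * C * b ^ α) :
    b ^ (2 - α) ≤ a ^ (2 - α) + 2 * C := by
  have ha0 : (0 : ℝ) < a := lt_of_lt_of_le one_pos ha
  have hb0 : (0 : ℝ) < b := lt_of_lt_of_le one_pos hb
  rcases le_or_gt b a with hba | hab
  · have : b ^ (2 - α) ≤ a ^ (2 - α) :=
      Real.rpow_le_rpow hb0.le hba (by linarith)
    linarith
  · have hbα : (0 : ℝ) < b ^ α := Real.rpow_pos_of_pos hb0 α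
    have haα : (0 : ℝ) < a ^ α := Real.rpow_pos_of_pos ha0 α
    have haαb : a ^ α ≤ b ^ α := Real.rpow_le_rpow ha0.le hab.le hα0
    have h1 : b ^ (2 - α) = b ^ (2 : ℝ) / b ^ α := Real.rpow_sub hb0 2 α
    have h2 : b ^ (2 : ℝ) / b ^ α ≤ (a ^ (2 : ℝ) + 2 * C * b ^ α) / b ^ α :=
      by gcongr
    have h3 : (a ^ (2 : ℝ) + 2 * C * b ^ α) / b ^ α
        = a ^ (2 : ℝ) / b ^ α + 2 * C := by
      field_simp
    have h4 : a ^ (2 : ℝ) / b ^ α ≤ a ^ (2 : ℝ) / a ^ α := by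
      apply div_le_div_of_nonneg_left (Real.rpow_nonneg ha0.le 2) haα haαb
    have h5 : a ^ (2 : ℝ) / a ^ α = a ^ (2 - α) := (Real.rpow_sub ha0 2 α).symm
    rw [h1]
    calc b ^ (2 : ℝ) / b ^ α ≤ a ^ (2 : ℝ) / b ^ α + 2 * C := by rw [← h3]; exact h2
    _ ≤ a ^ (2 - α) + 2 * C := by rw [← h5]; linarith

theorem discrete_iteration_two_terms (C α β : ℝ) (hC : 0 ≤ C)
    (hβ0 : 0 ≤ β) (hβα : β ≤ α) (hα2 : α < 2) (x : ℕ → ℝ) (hx : ∀ n, 1 ≤ x n)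
    (hrec : ∀ n, x (n + 1) ^ (2 : ℝ) ≤
      x n ^ (2 : ℝ) + C * (x (n + 1) ^ α + x (n + 1) ^ β)) :
    ∀ n : ℕ, x n ≤ (x 0 ^ (2 - α) + 2 * C * n) ^ (1 / (2 - α)) := by
  have hα0 : 0 ≤ α := le_trans hβ0 hβα
  have h2α : (0 : ℝ) < 2 - α := by linarith
  -- main induction: x n ^ (2 - α) ≤ x 0 ^ (2 - α) + 2 * C * n
  have main : ∀ n : ℕ, x n ^ (2 - α) ≤ x 0 ^ (2 - α) + 2 * C * n := by
    intro n
    induction n with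
    | zero => simp
    | succ n ih =>
      have hb := hx (n + 1)
      have hβle : x (n + 1) ^ β ≤ x (n + 1) ^ α :=
        Real.rpow_le_rpow_of_exponent_le hb hβα
      have hrec' : x (n + 1) ^ (2 : ℝ) ≤ x n ^ (2 : ℝ) + 2 * C * x (n + 1) ^ α := by
        have := hrec n
        nlinarith [this, mul_le_mul_of_nonneg_left hβle hC]
      have := key_step C α hC hα0 hα2 (x n) (x (n + 1)) (hx n) hb hrec'
      push_cast
      linarith
  intro n
  have h := main n
  have hxn0 : (0 : ℝ) < x n := lt_of_lt_of_le one_pos (hx n)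
  have := Real.rpow_le_rpow (Real.rpow_nonneg hxn0.le _) h (by positivity : (0:ℝ) ≤ 1 / (2 - α))
  calc x n = (x n ^ (2 - α)) ^ (1 / (2 - α)) := by
        rw [← Real.rpow_mul hxn0.le, mul_one_div_cancel h2α.ne', Real.rpow_one]
    _ ≤ _ := this
end

section
/- Let C > 0, let α, β be real numbers with 0 ≤ β ≤ α < 2, and let f : ℝ → ℝ be nondecreasing on [0,∞) with f(t) ≥ 1 for all t ≥ 0. Suppose that for every t ≥ 0 and every T with 0 < T ≤ 1 one has f(t+T)² − f(t)² ≤ C·(√T·f(t+T)^α + f(t+T)^β). Then there exists a constant C' > 0 (depending only on C, α, β and f(0)) such that f(T) ≤ C'·T^(1/(2−α)) for all T ≥ 1. -/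
theorem continuous_iteration_polynomial_growth (C α β : ℝ) (hC : 0 < C)
    (hβ0 : 0 ≤ β) (hβα : β ≤ α) (hα2 : α < 2) (f : ℝ → ℝ)
    (hmono : MonotoneOn f (Set.Ici 0)) (hf1 : ∀ t, 0 ≤ t → 1 ≤ f t)
    (hloc : ∀ t, 0 ≤ t → ∀ T, 0 < T → T ≤ 1 →
      f (t + T) ^ (2 : ℝ) - f t ^ (2 : ℝ) ≤
        C * (Real.sqrt T * f (t + T) ^ α + f (t + T) ^ β)) :
    ∃ C' : ℝ, 0 < C' ∧ ∀ T : ℝ, 1 ≤ T → f T ≤ C' * T ^ (1 / (2 - α)) := by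
  have hα0 : 0 ≤ α := le_trans hβ0 hβα
  have h2α : (0:ℝ) < 2 - α := by linarith
  have hf00 : (0:ℝ) < f 0 := lt_of_lt_of_le one_pos (hf1 0 le_rfl)
  have hf0sq : (0:ℝ) < f 0 ^ (2:ℝ) := Real.rpow_pos_of_pos hf00 _
  -- Key induction: f(n)^2 ≤ f(0)^2 + 2Cn·f(n)^α
  have key : ∀ n : ℕ, f n ^ (2:ℝ) ≤ f 0 ^ (2:ℝ) + 2 * C * n * f n ^ α := by
    intro n
    induction n with
    | zero => norm_num
    | succ n ih =>
      have hn0 : (0:ℝ) ≤ (n:ℝ) := n.cast_nonneg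
      have hn10 : (0:ℝ) ≤ (n:ℝ) + 1 := by linarith
      have hfn1 : 1 ≤ f n := hf1 _ hn0
      have hfn1' : 1 ≤ f ((n:ℝ) + 1) := hf1 _ hn10
      have hmono' : f n ≤ f ((n:ℝ) + 1) :=
        hmono (Set.mem_Ici.2 hn0) (Set.mem_Ici.2 hn10) (by linarith)
      have hloc' := hloc n hn0 1 one_pos le_rfl
      rw [Real.sqrt_one, one_mul] at hloc'
      have hβle : f ((n:ℝ) + 1) ^ β ≤ f ((n:ℝ) + 1) ^ α :=
        Real.rpow_le_rpow_of_exponent_le hfn1' hβα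
      have hβle' : C * f ((n:ℝ) + 1) ^ β ≤ C * f ((n:ℝ) + 1) ^ α :=
        mul_le_mul_of_nonneg_left hβle hC.le
      have hbase : f n ^ α ≤ f ((n:ℝ) + 1) ^ α :=
        Real.rpow_le_rpow (by linarith) hmono' hα0
      have hprod : 2 * C * n * f n ^ α ≤ 2 * C * n * f ((n:ℝ) + 1) ^ α :=
        mul_le_mul_of_nonneg_left hbase (by positivity)
      push_cast
      linarith
  refine ⟨(2 * (f 0 ^ (2:ℝ) + 2 * C)) ^ (1 / (2 - α)),
    Real.rpow_pos_of_pos (by linarith) _, ?_⟩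
  intro T hT
  have hT0 : (0:ℝ) ≤ T := by linarith
  set n := ⌈T⌉₊ with hn
  have hTn : T ≤ (n:ℝ) := Nat.le_ceil T
  have hn1 : (1:ℝ) ≤ (n:ℝ) := by linarith
  have hn2T : (n:ℝ) ≤ 2 * T := by
    have := Nat.ceil_lt_add_one hT0
    linarith
  have hfTn : f T ≤ f n := hmono (Set.mem_Ici.2 hT0) (Set.mem_Ici.2 (by linarith)) hTn
  have hfn1 : 1 ≤ f n := hf1 _ (by linarith)
  have hfn0 : (0:ℝ) < f n := lt_of_lt_of_le one_pos hfn1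
  have hαpos : (0:ℝ) < f n ^ α := Real.rpow_pos_of_pos hfn0 _
  have hge1 : (1:ℝ) ≤ f n ^ α := by
    calc (1:ℝ) = 1 ^ α := (Real.one_rpow α).symm
    _ ≤ f n ^ α := Real.rpow_le_rpow (by norm_num) hfn1 hα0
  have h1 : f n ^ (2 - α) ≤ f 0 ^ (2:ℝ) + 2 * C * n := by
    have heq : f n ^ (2 - α) = f n ^ (2:ℝ) / f n ^ α := Real.rpow_sub hfn0 2 α
    rw [heq, div_le_iff₀ hαpos]
    have hA : f 0 ^ (2:ℝ) ≤ f 0 ^ (2:ℝ) * f n ^ α :=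
      le_mul_of_one_le_right hf0sq.le hge1
    nlinarith [key n]
  have h2 : f 0 ^ (2:ℝ) + 2 * C * n ≤ 2 * (f 0 ^ (2:ℝ) + 2 * C) * T := by
    nlinarith [mul_le_mul_of_nonneg_left hn2T (by linarith : (0:ℝ) ≤ f 0 ^ (2:ℝ) + 2 * C),
      mul_nonneg hf0sq.le (by linarith : (0:ℝ) ≤ (n:ℝ) - 1)]
  have hfT0 : (0:ℝ) ≤ f T := by linarith [hf1 T hT0]
  have h3 : f T ^ (2 - α) ≤ 2 * (f 0 ^ (2:ℝ) + 2 * C) * T :=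
    le_trans (le_trans (Real.rpow_le_rpow hfT0 hfTn h2α.le) h1) h2
  have h4 := Real.rpow_le_rpow (by positivity) h3 (by positivity : (0:ℝ) ≤ 1 / (2 - α))
  rwa [← Real.rpow_mul hfT0, mul_one_div_cancel h2α.ne', Real.rpow_one,
    Real.mul_rpow (by linarith) hT0] at h4
end

section
/- Let m ≥ 2 be an integer, let s₀ ∈ [0,1/2), let ε be a real number with 0 < ε < (1−2s₀)/(m−1), and let C > 0. Let f : ℝ → ℝ be nondecreasing on [0,∞) with f(t) ≥ 1 for all t ≥ 0, and suppose that for every t ≥ 0 and every T with 0 < T ≤ 1 one has f(t+T)² − f(t)² ≤ C·(√T·f(t+T)^((2m−3+2s₀)/(m−1)+ε) + f(t+T)^((2m−4)/(m−1)+ε)). Then there exists a constant C' > 0 (depending only on C, m, s₀, ε and f(0)) such that f(T) ≤ C'·T^((m−1)/(1−2s₀−(m−1)ε)) for all T ≥ 1. -/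
private lemma bern_aux {y D p : ℝ} (hy : 0 < y) (hD : 0 ≤ D) (hp0 : 0 ≤ p) (hp1 : p ≤ 1) :
    (y ^ (2:ℝ) + D) ^ p ≤ y ^ (2*p) + p * y ^ (2*p - 2) * D := by
  have hy2 : (0:ℝ) < y ^ (2:ℝ) := Real.rpow_pos_of_pos hy 2
  have key : y ^ (2:ℝ) + D = y ^ (2:ℝ) * (1 + D / y ^ (2:ℝ)) := by field_simp
  have hs0 : (0:ℝ) ≤ D / y ^ (2:ℝ) := by positivity
  have hs : (-1:ℝ) ≤ D / y ^ (2:ℝ) := by linarith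
  have hbern : (1 + D / y ^ (2:ℝ)) ^ p ≤ 1 + p * (D / y ^ (2:ℝ)) :=
    rpow_one_add_le_one_add_mul_self hs hp0 hp1
  have e1 : (y ^ (2:ℝ)) ^ p = y ^ (2*p) := (Real.rpow_mul hy.le 2 p).symm
  have e2 : y ^ (2*p - 2) = y ^ (2*p) / y ^ (2:ℝ) := Real.rpow_sub hy _ _
  calc (y ^ (2:ℝ) + D) ^ p = (y ^ (2:ℝ)) ^ p * (1 + D / y ^ (2:ℝ)) ^ p := by
        rw [key, Real.mul_rpow hy2.le (by positivity)]
    _ ≤ (y ^ (2:ℝ)) ^ p * (1 + p * (D / y ^ (2:ℝ))) :=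
        mul_le_mul_of_nonneg_left hbern (Real.rpow_pos_of_pos hy2 p).le
    _ = y ^ (2*p) + p * y ^ (2*p - 2) * D := by
        rw [e1, e2]; field_simp

set_option maxHeartbeats 1000000 in
theorem iteration_step_2d_NLS (m : ℕ) (hm : 2 ≤ m) (s₀ ε C : ℝ)
    (hs₀0 : 0 ≤ s₀) (hs₀ : s₀ < 1 / 2) (hε0 : 0 < ε)
    (hε : ε < (1 - 2 * s₀) / (m - 1)) (hC : 0 < C) (f : ℝ → ℝ)
    (hmono : MonotoneOn f (Set.Ici 0)) (hf1 : ∀ t, 0 ≤ t → 1 ≤ f t)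
    (hloc : ∀ t, 0 ≤ t → ∀ T, 0 < T → T ≤ 1 →
      f (t + T) ^ (2 : ℝ) - f t ^ (2 : ℝ) ≤
        C * (Real.sqrt T * f (t + T) ^ ((2 * m - 3 + 2 * s₀) / (m - 1) + ε) +
          f (t + T) ^ ((2 * m - 4) / (m - 1) + ε))) :
    ∃ C' : ℝ, 0 < C' ∧ ∀ T : ℝ, 1 ≤ T →
      f T ≤ C' * T ^ ((m - 1) / (1 - 2 * s₀ - (m - 1) * ε)) := by
  have hm2 : (2:ℝ) ≤ (m:ℝ) := by exact_mod_cast hm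
  set M : ℝ := (m:ℝ) - 1 with hMdef
  set α : ℝ := (2 * (m:ℝ) - 3 + 2 * s₀) / M + ε with hαdef
  set β : ℝ := (2 * (m:ℝ) - 4) / M + ε with hβdef
  set γ : ℝ := 2 - α with hγdef
  have hM1 : (1:ℝ) ≤ M := by rw [hMdef]; linarith
  have hMpos : (0:ℝ) < M := by linarith
  have hM0 : M ≠ 0 := ne_of_gt hMpos
  have hγval : γ = (1 - 2 * s₀) / M - ε := by
    rw [hγdef, hαdef]; field_simp; ring
  have hγ0 : 0 < γ := by rw [hγval]; linarith
  have hγ1 : γ ≤ 1 := by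
    rw [hγval]
    have h1 : (1 - 2 * s₀) / M ≤ 1 / M := by gcongr; linarith
    have h2 : (1:ℝ) / M ≤ 1 := by rw [div_le_one hMpos]; exact hM1
    linarith
  have hβα : β ≤ α := by
    rw [hαdef, hβdef]
    have : (2 * (m:ℝ) - 4) / M ≤ (2 * (m:ℝ) - 3 + 2 * s₀) / M := by gcongr <;> linarith
    linarith
  have hγM : γ * M = 1 - 2 * s₀ - M * ε := by
    rw [hγval]; field_simp
  clear_value M α β γ
  have hα1 : 1 ≤ α := by rw [hγdef] at hγ1; linarith
  have hα0 : (0:ℝ) ≤ α := by linarith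
  -- Step 1: one-step bound with T = 1
  have hstep : ∀ t : ℝ, 0 ≤ t → f (t + 1) ^ γ ≤ f t ^ γ + 4 * C := by
    intro t ht
    have ht1 : (0:ℝ) ≤ t + 1 := by linarith
    have hx1 : 1 ≤ f (t + 1) := hf1 _ ht1
    have hy1 : 1 ≤ f t := hf1 t ht
    have hloc1 := hloc t ht 1 one_pos le_rfl
    rw [Real.sqrt_one, one_mul] at hloc1
    set x : ℝ := f (t + 1) with hxdef
    set y : ℝ := f t with hydef
    clear_value x y
    have hx0 : (0:ℝ) < x := by linarith
    have hy0 : (0:ℝ) < y := by linarith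
    have hβle : x ^ β ≤ x ^ α := Real.rpow_le_rpow_of_exponent_le hx1 hβα
    have h1 : x ^ (2:ℝ) ≤ y ^ (2:ℝ) + 2 * C * x ^ α := by
      have := mul_le_mul_of_nonneg_left hβle hC.le
      linarith
    by_cases hcase : x ^ γ ≤ 4 * C
    · have : (0:ℝ) ≤ y ^ γ := (Real.rpow_pos_of_pos hy0 γ).le
      linarith
    · push_neg at hcase
      have hxα : (0:ℝ) < x ^ α := Real.rpow_pos_of_pos hx0 α
      have hsplit : x ^ γ * x ^ α = x ^ (2:ℝ) := by
        rw [← Real.rpow_add hx0]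
        congr 1
        rw [hγdef]; ring
      have h2 : 2 * C * x ^ α < x ^ (2:ℝ) / 2 := by
        have ha : 2 * C < x ^ γ / 2 := by linarith
        have hb := mul_lt_mul_of_pos_right ha hxα
        have hc : x ^ γ / 2 * x ^ α = x ^ (2:ℝ) / 2 := by
          rw [div_mul_eq_mul_div, hsplit]
        linarith
      have hx2y2 : x ^ (2:ℝ) ≤ 2 * y ^ (2:ℝ) := by linarith
      have hyα : (0:ℝ) ≤ y ^ α := (Real.rpow_pos_of_pos hy0 α).le
      have hxαy : x ^ α ≤ 2 * y ^ α := by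
        have e1 : (x ^ (2:ℝ)) ^ (α/2) = x ^ α := by
          rw [← Real.rpow_mul hx0.le]; congr 1; ring
        have e2 : (2 * y ^ (2:ℝ)) ^ (α/2) = 2 ^ (α/2) * y ^ α := by
          rw [Real.mul_rpow (by norm_num) (Real.rpow_pos_of_pos hy0 2).le,
            ← Real.rpow_mul hy0.le]
          congr 1; ring
        have e3 : (x ^ (2:ℝ)) ^ (α/2) ≤ (2 * y ^ (2:ℝ)) ^ (α/2) :=
          Real.rpow_le_rpow (Real.rpow_pos_of_pos hx0 2).le hx2y2 (by linarith)
        have e4 : (2:ℝ) ^ (α/2) ≤ 2 ^ (1:ℝ) :=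
          Real.rpow_le_rpow_of_exponent_le one_le_two (by linarith)
        have e5 := mul_le_mul_of_nonneg_right e4 hyα
        rw [Real.rpow_one] at e5
        rw [← e1]
        calc (x ^ (2:ℝ)) ^ (α/2) ≤ (2 * y ^ (2:ℝ)) ^ (α/2) := e3
          _ = 2 ^ (α/2) * y ^ α := e2
          _ ≤ 2 * y ^ α := e5
      have hD : x ^ (2:ℝ) ≤ y ^ (2:ℝ) + 4 * C * y ^ α := by
        have := mul_le_mul_of_nonneg_left hxαy (by positivity : (0:ℝ) ≤ 2 * C)
        linarith
      have hp0 : (0:ℝ) ≤ γ/2 := by linarith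
      have hp1 : γ/2 ≤ 1 := by linarith
      have hD0 : (0:ℝ) ≤ 4 * C * y ^ α := by positivity
      have hb := bern_aux hy0 hD0 hp0 hp1
      have e5 : x ^ γ = (x ^ (2:ℝ)) ^ (γ/2) := by
        rw [← Real.rpow_mul hx0.le]; congr 1; ring
      have e6 : y ^ (2*(γ/2)) = y ^ γ := by congr 1; ring
      have e7 : y ^ (2*(γ/2) - 2) * y ^ α = 1 := by
        rw [← Real.rpow_add hy0]
        have h0 : 2*(γ/2) - 2 + α = 0 := by rw [hγdef]; ring
        rw [h0, Real.rpow_zero]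
      have h2γ : 2 * γ * C ≤ 4 * C := by nlinarith
      calc x ^ γ = (x ^ (2:ℝ)) ^ (γ/2) := e5
        _ ≤ (y ^ (2:ℝ) + 4 * C * y ^ α) ^ (γ/2) :=
            Real.rpow_le_rpow (Real.rpow_pos_of_pos hx0 2).le hD hp0
        _ ≤ y ^ (2*(γ/2)) + (γ/2) * y ^ (2*(γ/2) - 2) * (4 * C * y ^ α) := hb
        _ = y ^ γ + 2 * γ * C * (y ^ (2*(γ/2) - 2) * y ^ α) := by rw [e6]; ring
        _ = y ^ γ + 2 * γ * C := by rw [e7, mul_one]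
        _ ≤ y ^ γ + 4 * C := by linarith
  -- Step 2: induction
  have hind : ∀ n : ℕ, f n ^ γ ≤ f 0 ^ γ + 4 * C * n := by
    intro n
    induction n with
    | zero => simp
    | succ n ih =>
      have h := hstep n (Nat.cast_nonneg n)
      have e : ((n+1 : ℕ) : ℝ) = (n:ℝ) + 1 := by push_cast; ring
      rw [e]
      push_cast
      linarith
  -- Conclusion
  have hf00 : (1:ℝ) ≤ f 0 := hf1 0 le_rfl
  have hf0γ : (1:ℝ) ≤ f 0 ^ γ := Real.one_le_rpow hf00 hγ0.le
  set B : ℝ := f 0 ^ γ + 8 * C with hBdef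
  have hB1 : (1:ℝ) ≤ B := by rw [hBdef]; linarith
  have hB0 : (0:ℝ) < B := by linarith
  clear_value B
  refine ⟨B ^ (1/γ), Real.rpow_pos_of_pos hB0 _, ?_⟩
  intro T hT
  have hT0 : (0:ℝ) ≤ T := by linarith
  set n : ℕ := ⌈T⌉₊ with hndef
  have hTn : T ≤ (n:ℝ) := Nat.le_ceil T
  have hn2T : (n:ℝ) ≤ 2 * T := by
    have h := Nat.ceil_lt_add_one hT0
    rw [← hndef] at h
    linarith
  have hfT1 : 1 ≤ f T := hf1 T hT0
  have hfTn : f T ≤ f (n:ℝ) := hmono hT0 (le_trans hT0 hTn) hTn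
  have hkey : f T ^ γ ≤ B * T := by
    have h1 : f T ^ γ ≤ f (n:ℝ) ^ γ := Real.rpow_le_rpow (by linarith) hfTn hγ0.le
    have h2 := hind n
    have h3 : 4 * C * (n:ℝ) ≤ 8 * C * T := by nlinarith
    have h4 : f 0 ^ γ + 8 * C * T ≤ B * T := by rw [hBdef]; nlinarith
    linarith
  have hfinal : f T ≤ B ^ (1/γ) * T ^ (1/γ) := by
    have e1 : f T = (f T ^ γ) ^ (1/γ) := by
      rw [← Real.rpow_mul (by linarith), mul_one_div, div_self hγ0.ne', Real.rpow_one]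
    have e2 : (f T ^ γ) ^ (1/γ) ≤ (B * T) ^ (1/γ) :=
      Real.rpow_le_rpow (by positivity) hkey (by positivity)
    have e3 : (B * T) ^ (1/γ) = B ^ (1/γ) * T ^ (1/γ) := Real.mul_rpow hB0.le hT0
    rw [e1]; rw [e3] at e2; exact e2
  have hexp : M / (1 - 2 * s₀ - M * ε) = 1/γ := by
    rw [← hγM, mul_comm]
    rw [mul_comm γ M] at hγM
    have hMγ0 : M * γ ≠ 0 := by positivity
    field_simp
  rw [hexp]
  exact hfinal
end

section
/- Let K ≥ 1, let γ be a real number with 0 ≤ γ < 2, and let x : ℕ → ℝ be a sequence with x(n) ≥ 1 for all n, satisfying x(n+1)² ≤ K·x(n)² + K·x(n+1)^γ for all n. Then for every n, x(n) ≤ max(x(0), (2K)^(1/(2−γ)))·(2K)^(n/2); in particular x grows at most exponentially in n. -/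
theorem discrete_iteration_exponential_growth (K γ : ℝ) (hK : 1 ≤ K)
    (hγ0 : 0 ≤ γ) (hγ2 : γ < 2) (x : ℕ → ℝ) (hx : ∀ n, 1 ≤ x n)
    (hrec : ∀ n, x (n + 1) ^ (2 : ℝ) ≤ K * x n ^ (2 : ℝ) + K * x (n + 1) ^ γ) :
    ∀ n : ℕ, x n ≤ max (x 0) ((2 * K) ^ (1 / (2 - γ))) * (2 * K) ^ ((n : ℝ) / 2) := by
  set M : ℝ := max (x 0) ((2 * K) ^ (1 / (2 - γ))) with hMdef
  have h2K : (1 : ℝ) ≤ 2 * K := by linarith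
  have h2Kpos : (0 : ℝ) < 2 * K := by linarith
  have hM1 : (1 : ℝ) ≤ M := le_trans (hx 0) (le_max_left _ _)
  have hone_le : ∀ t : ℝ, 0 ≤ t → (1 : ℝ) ≤ (2 * K) ^ t := by
    intro t ht
    calc (1 : ℝ) = (1 : ℝ) ^ t := (Real.one_rpow t).symm
    _ ≤ (2 * K) ^ t := Real.rpow_le_rpow zero_le_one h2K ht
  have hsq : ∀ y : ℝ, y ^ (2 : ℝ) = y * y := by
    intro y
    rw [show (2 : ℝ) = ((2 : ℕ) : ℝ) by norm_num, Real.rpow_natCast]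
    ring
  intro n
  induction n with
  | zero =>
    simp only [Nat.cast_zero, zero_div, Real.rpow_zero, mul_one]
    exact le_max_left _ _
  | succ n ih =>
    have hxpos : (0 : ℝ) < x (n + 1) := lt_of_lt_of_le one_pos (hx (n + 1))
    by_cases h : x (n + 1) ^ ((2 : ℝ) - γ) ≤ 2 * K
    · -- small case
      have hexp : (0 : ℝ) < 2 - γ := by linarith
      have hE : (2 : ℝ) - γ ≠ 0 := ne_of_gt hexp
      have h1 : x (n + 1) = (x (n + 1) ^ ((2 : ℝ) - γ)) ^ (1 / (2 - γ)) := by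
        rw [← Real.rpow_mul hxpos.le, mul_one_div, div_self hE, Real.rpow_one]
      have h2 : x (n + 1) ≤ (2 * K) ^ (1 / (2 - γ)) := by
        rw [h1]
        exact Real.rpow_le_rpow (Real.rpow_nonneg hxpos.le _) h (by positivity)
      have h3 : x (n + 1) ≤ M := le_trans h2 (le_max_right _ _)
      have h4 : (1 : ℝ) ≤ (2 * K) ^ (((n + 1 : ℕ) : ℝ) / 2) := hone_le _ (by positivity)
      nlinarith
    · push_neg at h
      -- big case : x(n+1)^2 ≤ 2K x(n)^2
      have hsplit : x (n + 1) ^ ((2 : ℝ) - γ) * x (n + 1) ^ γ = x (n + 1) ^ (2 : ℝ) := by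
        rw [← Real.rpow_add hxpos]; ring_nf
      have hγpos : (0 : ℝ) < x (n + 1) ^ γ := Real.rpow_pos_of_pos hxpos γ
      have hkey : x (n + 1) ^ (2 : ℝ) ≤ 2 * K * x n ^ (2 : ℝ) := by
        have hr := hrec n
        have : 2 * K * x (n + 1) ^ γ < x (n + 1) ^ (2 : ℝ) := by
          rw [← hsplit]
          exact mul_lt_mul_of_pos_right h hγpos
        nlinarith
      set P : ℝ := (2 * K) ^ ((n : ℝ) / 2) with hP
      set Q : ℝ := (2 * K) ^ (((n : ℝ) + 1) / 2) with hQ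
      have hPpos : (0 : ℝ) < P := Real.rpow_pos_of_pos h2Kpos _
      have hQpos : (0 : ℝ) < Q := Real.rpow_pos_of_pos h2Kpos _
      have hQQ : Q * Q = P * P * (2 * K) := by
        rw [hP, hQ, ← Real.rpow_add h2Kpos, ← Real.rpow_add h2Kpos]
        rw [show ((n : ℝ) + 1) / 2 + ((n : ℝ) + 1) / 2 = (n : ℝ) / 2 + (n : ℝ) / 2 + 1 by ring]
        rw [Real.rpow_add h2Kpos, Real.rpow_one]
      have hcast : ((n + 1 : ℕ) : ℝ) = (n : ℝ) + 1 := by push_cast; ring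
      rw [hcast]
      have ih' : x n ≤ M * P := ih
      have hxn0 : (0 : ℝ) < x n := lt_of_lt_of_le one_pos (hx n)
      have hchain : x (n + 1) * x (n + 1) ≤ (M * Q) * (M * Q) := by
        have h1 : x (n + 1) * x (n + 1) ≤ 2 * K * (x n * x n) := by
          have := hkey
          rw [hsq, hsq] at this
          exact this
        have h2 : x n * x n ≤ (M * P) * (M * P) := by
          nlinarith
        calc x (n + 1) * x (n + 1) ≤ 2 * K * (x n * x n) := h1
        _ ≤ 2 * K * ((M * P) * (M * P)) := by nlinarith
        _ = (M * Q) * (M * Q) := by rw [show (M * Q) * (M * Q) = M * M * (Q * Q) by ring, hQQ]; ring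
      have hMQpos : (0 : ℝ) < M * Q := by positivity
      nlinarith [hchain, hxpos, hMQpos]
end

section
/- Let C > 0, let γ be a real number with 0 < γ < 2, and let f : ℝ → ℝ be nondecreasing on [0,∞) with f(t) ≥ 1 for all t ≥ 0. Suppose that for every t ≥ 0 and every T with 0 < T ≤ 1 one has f(t+T)² − f(t)² ≤ C·(T·f(t+T)² + f(t+T)^γ). Then there exist constants A > 0 and B > 0 (depending only on C, γ and f(0)) such that f(T) ≤ A·exp(B·T) for all T ≥ 0. -/
theorem continuous_iteration_exponential_growth (C γ : ℝ) (hC : 0 < C)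
    (hγ0 : 0 < γ) (hγ2 : γ < 2) (f : ℝ → ℝ)
    (hmono : MonotoneOn f (Set.Ici 0)) (hf1 : ∀ t, 0 ≤ t → 1 ≤ f t)
    (hloc : ∀ t, 0 ≤ t → ∀ T, 0 < T → T ≤ 1 →
      f (t + T) ^ (2 : ℝ) - f t ^ (2 : ℝ) ≤
        C * (T * f (t + T) ^ (2 : ℝ) + f (t + T) ^ γ)) :
    ∃ A : ℝ, 0 < A ∧ ∃ B : ℝ, 0 < B ∧
      ∀ T : ℝ, 0 ≤ T → f T ≤ A * Real.exp (B * T) := by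
  set T₀ : ℝ := min 1 (1 / (2 * C)) with hT₀def
  have hT₀pos : 0 < T₀ := lt_min one_pos (by positivity)
  have hT₀le1 : T₀ ≤ 1 := min_le_left _ _
  have hCT₀ : C * T₀ ≤ 1 / 2 := by
    have h : T₀ ≤ 1 / (2 * C) := min_le_right _ _
    calc C * T₀ ≤ C * (1 / (2 * C)) := by nlinarith
      _ = 1 / 2 := by field_simp
  set R2 : ℝ := (4 * C) ^ (2 / (2 - γ)) with hR2def
  have hR2pos : 0 < R2 := Real.rpow_pos_of_pos (by linarith) _
  set M : ℝ := 4 + R2 with hMdef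
  have hM1 : 1 < M := by simp only [hMdef]; linarith
  have hMpos : (0:ℝ) < M := by linarith
  -- key step: f(t+T₀)^2 ≤ M * f t ^ 2
  have step : ∀ t, 0 ≤ t → f (t + T₀) ^ (2:ℝ) ≤ M * f t ^ (2:ℝ) := by
    intro t ht
    have h := hloc t ht T₀ hT₀pos hT₀le1
    set y := f (t + T₀) with hy
    set x := f t with hx
    have hy1 : 1 ≤ y := hf1 _ (by linarith)
    have hx1 : 1 ≤ x := hf1 _ ht
    have hypos : 0 < y := by linarith
    have hxpos : 0 < x := by linarith
    have hy2pos : 0 < y ^ (2:ℝ) := Real.rpow_pos_of_pos hypos _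
    have hx2ge : (1:ℝ) ≤ x ^ (2:ℝ) := Real.one_le_rpow hx1 (by norm_num)
    have hygpos : 0 < y ^ γ := Real.rpow_pos_of_pos hypos _
    have hmain : (1/2) * y ^ (2:ℝ) ≤ x ^ (2:ℝ) + C * y ^ γ := by
      nlinarith [mul_le_mul_of_nonneg_right hCT₀ (le_of_lt hy2pos)]
    have hsplit : y ^ γ * y ^ (2 - γ) = y ^ (2:ℝ) := by
      rw [← Real.rpow_add hypos]; ring_nf
    rcases le_or_gt (4 * C) (y ^ (2 - γ)) with hcase | hcase
    · have h1 : C * y ^ γ ≤ y ^ (2:ℝ) / 4 := by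
        nlinarith [mul_le_mul_of_nonneg_left hcase (le_of_lt hygpos)]
      have h2 : (1/4) * y ^ (2:ℝ) ≤ x ^ (2:ℝ) := by linarith
      nlinarith [mul_le_mul_of_nonneg_left hx2ge (le_of_lt hR2pos)]
    · have hexp : 0 < 2 / (2 - γ) := div_pos two_pos (by linarith)
      have h1 : (y ^ (2 - γ)) ^ (2 / (2 - γ)) ≤ R2 :=
        Real.rpow_le_rpow (le_of_lt (Real.rpow_pos_of_pos hypos _))
          (le_of_lt hcase) (le_of_lt hexp)
      have h2 : (y ^ (2 - γ)) ^ (2 / (2 - γ)) = y ^ (2:ℝ) := by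
        rw [← Real.rpow_mul (le_of_lt hypos)]
        congr 1
        have hne : (2:ℝ) - γ ≠ 0 := by linarith
        field_simp
      have hy2 : y ^ (2:ℝ) ≤ R2 := by rw [← h2]; exact h1
      nlinarith [mul_le_mul_of_nonneg_left hx2ge (le_of_lt hR2pos)]
  -- convert to first-power step with S = √M
  set S : ℝ := Real.sqrt M with hSdef
  have hS1 : 1 < S := by
    rw [hSdef]
    have := Real.sqrt_lt_sqrt (by norm_num) hM1
    simpa using this
  have hSpos : 0 < S := by linarith
  have step1 : ∀ t, 0 ≤ t → f (t + T₀) ≤ S * f t := by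
    intro t ht
    have h := step t ht
    have hy0 : 0 ≤ f (t + T₀) := le_trans zero_le_one (hf1 _ (by linarith))
    have hx0 : 0 ≤ f t := le_trans zero_le_one (hf1 _ ht)
    have h2 : f (t + T₀) ^ (2:ℝ) = f (t + T₀) ^ 2 := by
      rw [← Real.rpow_natCast (f (t + T₀)) 2]; norm_num
    have h3 : f t ^ (2:ℝ) = f t ^ 2 := by
      rw [← Real.rpow_natCast (f t) 2]; norm_num
    rw [h2, h3] at h
    calc f (t + T₀) = Real.sqrt (f (t + T₀) ^ 2) := (Real.sqrt_sq hy0).symm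
      _ ≤ Real.sqrt (M * f t ^ 2) := Real.sqrt_le_sqrt h
      _ = S * f t := by
          rw [Real.sqrt_mul (le_of_lt hMpos), Real.sqrt_sq hx0]
  -- iterate
  have iter : ∀ n : ℕ, f (n * T₀) ≤ S ^ n * f 0 := by
    intro n
    induction n with
    | zero => simp
    | succ n ih =>
      have hn0 : (0:ℝ) ≤ n * T₀ := by positivity
      have h1 : f ((n:ℝ) * T₀ + T₀) ≤ S * f ((n:ℝ) * T₀) := step1 _ hn0
      have h2 : ((n+1 : ℕ) : ℝ) * T₀ = (n:ℝ) * T₀ + T₀ := by push_cast; ring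
      rw [h2]
      calc f ((n:ℝ) * T₀ + T₀) ≤ S * f ((n:ℝ) * T₀) := h1
        _ ≤ S * (S ^ n * f 0) := by nlinarith [pow_nonneg (le_of_lt hSpos) n]
        _ = S ^ (n+1) * f 0 := by ring
  -- conclude
  have hf0pos : 0 < f 0 := lt_of_lt_of_le one_pos (hf1 0 le_rfl)
  set L : ℝ := Real.log S with hLdef
  have hLpos : 0 < L := Real.log_pos hS1
  refine ⟨f 0 * S, mul_pos hf0pos hSpos, L / T₀, div_pos hLpos hT₀pos, ?_⟩
  intro T hT
  obtain ⟨n, hn1, hnT⟩ : ∃ n : ℕ, T / T₀ ≤ (n : ℝ) ∧ (n : ℝ) ≤ T / T₀ + 1 :=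
    ⟨⌈T / T₀⌉₊, Nat.le_ceil _, by
      have := Nat.ceil_lt_add_one (div_nonneg hT (le_of_lt hT₀pos))
      linarith⟩
  have hTn : T ≤ n * T₀ := by
    calc T = (T / T₀) * T₀ := (div_mul_cancel₀ T hT₀pos.ne').symm
      _ ≤ (n : ℝ) * T₀ := mul_le_mul_of_nonneg_right hn1 (le_of_lt hT₀pos)
  have h1 : f T ≤ f (n * T₀) := by
    apply hmono (Set.mem_Ici.mpr hT) (Set.mem_Ici.mpr (by positivity)) hTn
  have h2 : S ^ n = Real.exp ((n:ℝ) * L) := by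
    rw [hLdef, mul_comm, Real.exp_mul, Real.exp_log hSpos, ← Real.rpow_natCast]
  have h3 : Real.exp ((n:ℝ) * L) ≤ Real.exp ((T / T₀ + 1) * L) := by
    exact Real.exp_le_exp.mpr (mul_le_mul_of_nonneg_right hnT (le_of_lt hLpos))
  have h4 : Real.exp ((T / T₀ + 1) * L) = S * Real.exp (L / T₀ * T) := by
    rw [show (T / T₀ + 1) * L = L + L / T₀ * T by ring,
      Real.exp_add, Real.exp_log hSpos]
  calc f T ≤ f (n * T₀) := h1
    _ ≤ S ^ n * f 0 := iter n
    _ = Real.exp ((n:ℝ) * L) * f 0 := by rw [h2]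
    _ ≤ Real.exp ((T / T₀ + 1) * L) * f 0 := mul_le_mul_of_nonneg_right h3 (le_of_lt hf0pos)
    _ = f 0 * S * Real.exp (L / T₀ * T) := by rw [h4]; ring
end

section
/- Let p be a real number with 2 < p < 3, let C > 0, let γ be a real number with 0 < γ < (p+5)/4, and let f : ℝ → ℝ be nondecreasing on [0,∞) with f(t) ≥ 1 for all t ≥ 0. Suppose that for every t ≥ 0 and every T with 0 < T ≤ 1 one has f(t+T)² − f(t)² ≤ C·(T·f(t+T)^((p+5)/4) + f(t+T)^γ). Then there exists a constant C' > 0 (depending only on C, p, γ and f(0)) such that f(T) ≤ C'·T^(4/(3−p)) for all T ≥ 1. -/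
open Real

lemma half_le_aux {x y : ℝ} (hy0 : 0 < y) (h : x * x ≤ 2 * (y * y)) : x / 2 ≤ y := by
  nlinarith [mul_pos hy0 hy0]

lemma step_aux {C ε x y : ℝ} (hC : 0 < C) (hε : 0 < ε) (hε1 : ε ≤ 1)
    (hy : 1 ≤ y) (hxy : y ≤ x)
    (h : x ^ (2:ℝ) - y ^ (2:ℝ) ≤ 2 * C * x ^ (2 - ε)) :
    x ^ ε ≤ y ^ ε + 4 * C := by
  have hx : 1 ≤ x := hy.trans hxy
  have hx0 : (0:ℝ) < x := by linarith
  have hy0 : (0:ℝ) < y := by linarith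
  have hb0 : (0:ℝ) < y ^ ε := Real.rpow_pos_of_pos hy0 ε
  have ha0 : (0:ℝ) < x ^ ε := Real.rpow_pos_of_pos hx0 ε
  have hX0 : (0:ℝ) < x ^ (2:ℝ) := Real.rpow_pos_of_pos hx0 _
  have hY0 : (0:ℝ) < y ^ (2:ℝ) := Real.rpow_pos_of_pos hy0 _
  have hM0 : (0:ℝ) < x ^ (2 - ε) := Real.rpow_pos_of_pos hx0 _
  by_cases hcase : x ^ (2:ℝ) ≤ 2 * y ^ (2:ℝ)
  · -- case B : x² ≤ 2y², use Bernoulli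
    have hr : (1:ℝ) ≤ 2 / ε := by
      rw [le_div_iff₀ hε]; linarith
    have hs : (-1:ℝ) ≤ x ^ ε / y ^ ε - 1 := by
      have : (0:ℝ) ≤ x ^ ε / y ^ ε := by positivity
      linarith
    have hbern := one_add_mul_self_le_rpow_one_add hs hr
    have hkey : (1 + (x ^ ε / y ^ ε - 1)) ^ (2/ε) = x ^ (2:ℝ) / y ^ (2:ℝ) := by
      have h2e : ε * (2/ε) = 2 := by field_simp
      rw [add_sub_cancel, Real.div_rpow ha0.le hb0.le, ← Real.rpow_mul hx0.le,
        ← Real.rpow_mul hy0.le, h2e]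
    rw [hkey] at hbern
    -- (2/ε) * (x^ε - y^ε) ≤ (x² - y²) * y^(ε-2)
    have h1 : (2/ε) * (x ^ ε - y ^ ε) ≤ (x ^ (2:ℝ) - y ^ (2:ℝ)) / y ^ (2:ℝ) * y ^ ε := by
      have h2 : (2/ε) * (x ^ ε / y ^ ε - 1) ≤ (x ^ (2:ℝ) - y ^ (2:ℝ)) / y ^ (2:ℝ) := by
        have : x ^ (2:ℝ) / y ^ (2:ℝ) - 1 = (x ^ (2:ℝ) - y ^ (2:ℝ)) / y ^ (2:ℝ) := by
          field_simp
        linarith [hbern, this]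
      have := mul_le_mul_of_nonneg_right h2 hb0.le
      calc (2/ε) * (x ^ ε - y ^ ε) = (2/ε) * (x ^ ε / y ^ ε - 1) * y ^ ε := by
            field_simp
        _ ≤ (x ^ (2:ℝ) - y ^ (2:ℝ)) / y ^ (2:ℝ) * y ^ ε := this
    have hXY : 0 ≤ x ^ (2:ℝ) - y ^ (2:ℝ) := by
      have := Real.rpow_le_rpow hy0.le hxy (by norm_num : (0:ℝ) ≤ 2)
      linarith
    -- y^(ε-2) ≤ 4 * x^(ε-2)
    have hyx2 : x / 2 ≤ y := by
      have hXx : x ^ (2:ℝ) = x * x := by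
        rw [show (2:ℝ) = ((2:ℕ):ℝ) by norm_num, Real.rpow_natCast]; ring
      have hYy : y ^ (2:ℝ) = y * y := by
        rw [show (2:ℝ) = ((2:ℕ):ℝ) by norm_num, Real.rpow_natCast]; ring
      exact half_le_aux hy0 (by rw [← hXx, ← hYy]; exact hcase)
    have hmono : y ^ (ε - 2) ≤ (x/2) ^ (ε - 2) := by
      apply Real.rpow_le_rpow_of_nonpos (by linarith) hyx2 (by linarith)
    have hhalf : (x/2) ^ (ε - 2) ≤ 4 * x ^ (ε - 2) := by
      have e1 : (x/2) ^ (ε - 2) = x ^ (ε - 2) * ((2:ℝ) ^ (2 - ε)) := by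
        rw [div_eq_mul_inv, Real.mul_rpow hx0.le (by positivity),
          ← Real.rpow_neg_one (2:ℝ), ← Real.rpow_mul (by norm_num : (0:ℝ) ≤ 2)]
        ring_nf
      have e2 : (2:ℝ) ^ (2 - ε) ≤ (2:ℝ) ^ (2:ℝ) :=
        Real.rpow_le_rpow_of_exponent_le (by norm_num) (by linarith)
      have e3 : (2:ℝ) ^ (2:ℝ) = 4 := by
        rw [show (2:ℝ) = ((2:ℕ):ℝ) by norm_num, Real.rpow_natCast]; norm_num
      have hxe : (0:ℝ) < x ^ (ε - 2) := Real.rpow_pos_of_pos hx0 _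
      rw [e1]
      nlinarith
    have hcomb : (x ^ (2:ℝ) - y ^ (2:ℝ)) / y ^ (2:ℝ) * y ^ ε
        ≤ 2 * C * x ^ (2 - ε) * (4 * x ^ (ε - 2)) := by
      have hyy : (x ^ (2:ℝ) - y ^ (2:ℝ)) / y ^ (2:ℝ) * y ^ ε
          = (x ^ (2:ℝ) - y ^ (2:ℝ)) * y ^ (ε - 2) := by
        rw [Real.rpow_sub hy0]; field_simp
      rw [hyy]
      have h4 : (0:ℝ) ≤ y ^ (ε - 2) := (Real.rpow_pos_of_pos hy0 _).le
      have h5 : y ^ (ε - 2) ≤ 4 * x ^ (ε - 2) := hmono.trans hhalf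
      exact mul_le_mul h (by linarith) h4 (by positivity)
    have hprod : x ^ (2 - ε) * x ^ (ε - 2) = 1 := by
      rw [← Real.rpow_add hx0]; norm_num
    have hfin : (2/ε) * (x ^ ε - y ^ ε) ≤ 8 * C := by
      calc (2/ε) * (x ^ ε - y ^ ε) ≤ 2 * C * x ^ (2 - ε) * (4 * x ^ (ε - 2)) :=
            h1.trans hcomb
        _ = 8 * C * (x ^ (2 - ε) * x ^ (ε - 2)) := by ring
        _ = 8 * C := by rw [hprod]; ring
    -- conclude
    have hmul := mul_le_mul_of_nonneg_left hfin hε.le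
    have h2e : ε * (2/ε) = 2 := by field_simp
    have : 2 * (x ^ ε - y ^ ε) ≤ ε * (8 * C) := by
      calc 2 * (x ^ ε - y ^ ε) = ε * (2/ε) * (x ^ ε - y ^ ε) := by rw [h2e]
        _ = ε * ((2/ε) * (x ^ ε - y ^ ε)) := by ring
        _ ≤ ε * (8 * C) := hmul
    nlinarith
  · -- case A : x² > 2y², then x^ε ≤ 4C
    push_neg at hcase
    have h6 : x ^ (2:ℝ) ≤ 4 * C * x ^ (2 - ε) := by
      nlinarith [hY0]
    have h7 : x ^ ε * x ^ (2 - ε) = x ^ (2:ℝ) := by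
      rw [← Real.rpow_add hx0]; norm_num
    have h8 : x ^ ε * x ^ (2 - ε) ≤ 4 * C * x ^ (2 - ε) := by rw [h7]; exact h6
    have h9 : x ^ ε ≤ 4 * C := le_of_mul_le_mul_right (by linarith) hM0
    linarith [hb0.le]

theorem iteration_subcubic_3d_NLS (p C γ : ℝ) (hp2 : 2 < p) (hp3 : p < 3)
    (hC : 0 < C) (hγ0 : 0 < γ) (hγ : γ < (p + 5) / 4) (f : ℝ → ℝ)
    (hmono : MonotoneOn f (Set.Ici 0)) (hf1 : ∀ t, 0 ≤ t → 1 ≤ f t)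
    (hloc : ∀ t, 0 ≤ t → ∀ T, 0 < T → T ≤ 1 →
      f (t + T) ^ (2 : ℝ) - f t ^ (2 : ℝ) ≤
        C * (T * f (t + T) ^ ((p + 5) / 4) + f (t + T) ^ γ)) :
    ∃ C' : ℝ, 0 < C' ∧ ∀ T : ℝ, 1 ≤ T → f T ≤ C' * T ^ (4 / (3 - p)) := by
  set ε : ℝ := (3 - p) / 4 with hεdef
  have hε : 0 < ε := by rw [hεdef]; linarith
  have hε1 : ε ≤ 1 := by rw [hεdef]; linarith
  have hαε : 2 - ε = (p + 5) / 4 := by rw [hεdef]; ring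
  -- induction bound at integer times
  have hind : ∀ n : ℕ, f n ^ ε ≤ f 0 ^ ε + 4 * C * n := by
    intro n
    induction n with
    | zero => simp
    | succ n ih =>
      have hn : (0:ℝ) ≤ (n:ℝ) := Nat.cast_nonneg n
      have hn1 : (0:ℝ) ≤ (n:ℝ) + 1 := by linarith
      have hloc' := hloc n hn 1 one_pos le_rfl
      have hx1 : 1 ≤ f ((n:ℝ) + 1) := hf1 _ hn1
      have hxy : f (n:ℝ) ≤ f ((n:ℝ) + 1) :=
        hmono (Set.mem_Ici.mpr hn) (Set.mem_Ici.mpr hn1) (by linarith)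
      have hγα : f ((n:ℝ) + 1) ^ γ ≤ f ((n:ℝ) + 1) ^ ((p + 5) / 4) :=
        Real.rpow_le_rpow_of_exponent_le hx1 hγ.le
      have hbd : f ((n:ℝ) + 1) ^ (2:ℝ) - f (n:ℝ) ^ (2:ℝ)
          ≤ 2 * C * f ((n:ℝ) + 1) ^ (2 - ε) := by
        rw [hαε]
        calc f ((n:ℝ) + 1) ^ (2:ℝ) - f (n:ℝ) ^ (2:ℝ)
            ≤ C * (1 * f ((n:ℝ) + 1) ^ ((p + 5) / 4) + f ((n:ℝ) + 1) ^ γ) := hloc'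
          _ ≤ 2 * C * f ((n:ℝ) + 1) ^ ((p + 5) / 4) := by nlinarith
      have hstep := step_aux hC hε hε1 (hf1 _ hn) hxy hbd
      have hcast : ((n + 1 : ℕ) : ℝ) = (n:ℝ) + 1 := by push_cast; ring
      rw [hcast]
      push_cast
      linarith
  -- conclusion
  have hf0 : (0:ℝ) < f 0 ^ ε := Real.rpow_pos_of_pos (by linarith [hf1 0 le_rfl]) ε
  refine ⟨(f 0 ^ ε + 8 * C) ^ (4 / (3 - p)), Real.rpow_pos_of_pos (by linarith) _, ?_⟩
  intro T hT
  have hT0 : (0:ℝ) ≤ T := by linarith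
  set n : ℕ := ⌈T⌉₊ with hn
  have hTn : T ≤ (n:ℝ) := Nat.le_ceil T
  have hnT : (n:ℝ) ≤ T + 1 := (Nat.ceil_lt_add_one hT0).le
  have hfTn : f T ≤ f (n:ℝ) :=
    hmono (Set.mem_Ici.mpr hT0) (Set.mem_Ici.mpr (by linarith)) hTn
  have hfT0 : (0:ℝ) < f T := by linarith [hf1 T hT0]
  have hchain : f T ^ ε ≤ (f 0 ^ ε + 8 * C) * T := by
    have h1 : f T ^ ε ≤ f (n:ℝ) ^ ε :=
      Real.rpow_le_rpow hfT0.le hfTn hε.le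
    have h2 := hind n
    have h3 : 4 * C * (n:ℝ) ≤ 8 * C * T := by nlinarith
    have h4 : f 0 ^ ε + 8 * C * T ≤ (f 0 ^ ε + 8 * C) * T := by nlinarith
    linarith
  have h3p : (0:ℝ) < 3 - p := by linarith
  have hinv : ε * (4 / (3 - p)) = 1 := by
    rw [hεdef]; field_simp
  have hq : (0:ℝ) ≤ 4 / (3 - p) := (div_pos (by norm_num) h3p).le
  have hfTe : f T = (f T ^ ε) ^ (4 / (3 - p)) := by
    rw [← Real.rpow_mul hfT0.le, hinv, Real.rpow_one]
  calc f T = (f T ^ ε) ^ (4 / (3 - p)) := hfTe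
    _ ≤ ((f 0 ^ ε + 8 * C) * T) ^ (4 / (3 - p)) :=
        Real.rpow_le_rpow (by positivity) hchain hq
    _ = (f 0 ^ ε + 8 * C) ^ (4 / (3 - p)) * T ^ (4 / (3 - p)) :=
        Real.mul_rpow (by linarith) hT0
end
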